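/- Under the standing assumptions, for all θ, θ' ∈ ℝ^d, every 0 < λ < 1 and every ε_h ∈ (0,1/2], the derivative of the tamed coefficient satisfies the polynomially weighted Lipschitz bound ‖∇h_λ(θ) − ∇h_λ(θ')‖ ≤ L_{∇,ε_h} (1+|θ|+|θ'|)^{(l+1)(1/ε_h+1)−2} |θ − θ'|, where L_{∇,ε_h} := (10√2 + 4/ε_h)(l+1)² · max{K_H, L, K_h, a}. -/

import Mathlib

/-!
Write `h_λ(θ) = aθ + φ(|θ|) F(θ)` with `F = h - a id`, the taming profile
`φ(s) = (1 + λ s^r)^(-ε)` and `r = (l+1)/ε`. Then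
`∇h_λ(θ) = a I + φ(|θ|) (H(θ) - a I) + F(θ) ⊗ ψ(θ)`, where `ψ(θ) = C(|θ|) θ` (with
`C = tamingGradCoeff`) is the gradient of `φ(|·|)`. Because `λ ≤ 1`, every `λ s^t` with
`0 ≤ t ≤ r` is dominated by `1 + λ s^r`; this gives `|C(s)| ≤ εr`, `|C(s)| s ≤ εr` and
`|C'(s)| ≤ ε(ε+2) r² s^(r-3)`, so `φ(|·|)` is `εr`-Lipschitz and `ψ` is Lipschitz with a constant
growing like `|θ|^(r-2)`. Splitting both products by the Leibniz rule and using the polynomial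
growth of `H` and `h` bounds each of the four resulting terms by a constant times
`(1+|θ|+|θ'|)^(r+l-1) |θ-θ'|`, and `r + l - 1 = (l+1)(1/ε+1) - 2`.
-/

open Real

noncomputable def tamingFactor (lam r eps s : ℝ) : ℝ := (1 + lam * s ^ r) ^ (-eps)

noncomputable def tamingGradCoeff (lam r eps s : ℝ) : ℝ :=
  -(eps * lam * r) * s ^ (r - 2) * (1 + lam * s ^ r) ^ (-(eps + 1))

noncomputable def tamingGradCoeffDeriv (lam r eps s : ℝ) : ℝ :=
  eps * r * s ^ (r - 3) * ((eps + 1) * r * (lam ^ 2 * s ^ r * (1 + lam * s ^ r) ^ (-(eps + 2)))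
    - (r - 2) * (lam * (1 + lam * s ^ r) ^ (-(eps + 1))))

lemma mul_rpow_neg_add_one_le_one {c w e : ℝ} (hcw : c ≤ w) (hw : 1 ≤ w) (he : 0 ≤ e) :
    c * w ^ (-(e + 1)) ≤ 1 :=
  calc c * w ^ (-(e + 1)) ≤ w * w ^ (-(e + 1)) := by gcongr
    _ = w ^ (-e) := by rw [show -e = 1 + -(e + 1) by ring, rpow_add (by linarith), rpow_one]
    _ ≤ 1 := rpow_le_one_of_one_le_of_nonpos hw (by linarith)

section Scalar

variable {lam r eps s : ℝ}

lemma one_le_one_add_mul_rpow (hlam : 0 ≤ lam) (hs : 0 ≤ s) : 1 ≤ 1 + lam * s ^ r :=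
  le_add_of_nonneg_right (by positivity)

lemma mul_rpow_le_one_add_mul_rpow {t : ℝ} (hlam0 : 0 ≤ lam) (hlam1 : lam ≤ 1) (hs : 0 ≤ s)
    (ht : 0 ≤ t) (htr : t ≤ r) : lam * s ^ t ≤ 1 + lam * s ^ r := by
  rcases le_total s 1 with h | h
  · nlinarith [rpow_le_one hs h ht, rpow_nonneg hs r]
  · nlinarith [rpow_le_rpow_of_exponent_le h htr, rpow_nonneg hs t]

lemma abs_tamingFactor_le_one (hlam : 0 ≤ lam) (hs : 0 ≤ s) (heps : 0 ≤ eps) :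
    |tamingFactor lam r eps s| ≤ 1 := by
  have hW := one_le_one_add_mul_rpow (r := r) hlam hs
  rw [tamingFactor, abs_of_nonneg (by positivity)]
  exact rpow_le_one_of_one_le_of_nonpos hW (by linarith)

lemma abs_neg_mul_rpow_mul_le {t : ℝ} (hlam0 : 0 ≤ lam) (hlam1 : lam ≤ 1) (hs : 0 ≤ s)
    (heps : 0 ≤ eps) (ht : 0 ≤ t) (htr : t ≤ r) :
    |-(eps * r) * (lam * s ^ t * (1 + lam * s ^ r) ^ (-(eps + 1)))| ≤ eps * r := by
  have hW := one_le_one_add_mul_rpow (r := r) hlam0 hs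
  have hr : 0 ≤ r := ht.trans htr
  rw [abs_mul, abs_neg, abs_of_nonneg (by positivity), abs_of_nonneg (by positivity)]
  exact mul_le_of_le_one_right (by positivity)
    (mul_rpow_neg_add_one_le_one (mul_rpow_le_one_add_mul_rpow hlam0 hlam1 hs ht htr) hW heps)

lemma abs_tamingGradCoeff_le (hlam0 : 0 ≤ lam) (hlam1 : lam ≤ 1) (hs : 0 ≤ s) (heps : 0 ≤ eps)
    (hr : 2 ≤ r) : |tamingGradCoeff lam r eps s| ≤ eps * r := by
  convert abs_neg_mul_rpow_mul_le hlam0 hlam1 hs heps (by linarith : 0 ≤ r - 2) (by linarith)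
    using 2
  unfold tamingGradCoeff; ring

lemma abs_tamingGradCoeff_mul_le (hlam0 : 0 ≤ lam) (hlam1 : lam ≤ 1) (hs : 0 ≤ s)
    (heps : 0 ≤ eps) (hr : 2 ≤ r) : |tamingGradCoeff lam r eps s| * s ≤ eps * r := by
  have hpow : s ^ (r - 1) = s ^ (r - 2) * s := by
    rw [← rpow_add_one' hs (by linarith)]; ring_nf
  calc |tamingGradCoeff lam r eps s| * s = |tamingGradCoeff lam r eps s * s| := by
        rw [abs_mul, abs_of_nonneg hs]
    _ = |-(eps * r) * (lam * s ^ (r - 1) * (1 + lam * s ^ r) ^ (-(eps + 1)))| := by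
        rw [hpow]; unfold tamingGradCoeff; ring_nf
    _ ≤ eps * r :=
        abs_neg_mul_rpow_mul_le hlam0 hlam1 hs heps (by linarith : (0:ℝ) ≤ r - 1) (by linarith)

lemma hasDerivAt_tamingGradCoeff (hlam : 0 ≤ lam) (hr : 3 ≤ r) (hs : 0 ≤ s) :
    HasDerivAt (tamingGradCoeff lam r eps) (tamingGradCoeffDeriv lam r eps s) s := by
  have hW := one_le_one_add_mul_rpow (r := r) hlam hs
  have hinner : HasDerivAt (fun t => 1 + lam * t ^ r) (lam * (r * s ^ (r - 1))) s :=
    ((hasDerivAt_rpow_const (Or.inr (by linarith))).const_mul lam).const_add 1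
  have hpow : HasDerivAt (fun t => t ^ (r - 2)) ((r - 2) * s ^ (r - 2 - 1)) s :=
    hasDerivAt_rpow_const (Or.inr (by linarith))
  have hWpow := ((hasDerivAt_rpow_const (p := -(eps + 1)) (Or.inl (by linarith))).comp s hinner)
  have hprod : s ^ (r - 2) * s ^ (r - 1) = s ^ (r - 3) * s ^ r := by
    rw [← rpow_add' hs (by linarith), ← rpow_add' hs (by linarith)]; ring_nf
  refine ((hpow.const_mul (-(eps * lam * r))).mul hWpow).congr_deriv ?_
  rw [tamingGradCoeffDeriv, show r - 2 - 1 = r - 3 by ring,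
    show -(eps + 2) = -(eps + 1) - 1 by ring]
  dsimp only [Function.comp_apply]
  linear_combination
    eps * (eps + 1) * lam ^ 2 * r ^ 2 * (1 + lam * s ^ r) ^ (-(eps + 1) - 1) * hprod

lemma abs_tamingGradCoeffDeriv_le (hlam0 : 0 ≤ lam) (hlam1 : lam ≤ 1) (hs : 0 ≤ s)
    (heps : 0 ≤ eps) (hr : 3 ≤ r) :
    |tamingGradCoeffDeriv lam r eps s| ≤ eps * (eps + 2) * r ^ 2 * s ^ (r - 3) := by
  have hW := one_le_one_add_mul_rpow (r := r) hlam0 hs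
  have hX : lam ^ 2 * s ^ r * (1 + lam * s ^ r) ^ (-(eps + 2)) ≤ 1 := by
    rw [show -(eps + 2) = -(eps + 1 + 1) by ring]
    exact mul_rpow_neg_add_one_le_one (by nlinarith [rpow_nonneg hs r]) hW (by linarith)
  have hY : lam * (1 + lam * s ^ r) ^ (-(eps + 1)) ≤ 1 :=
    mul_rpow_neg_add_one_le_one (by linarith) hW heps
  have hX0 : 0 ≤ lam ^ 2 * s ^ r * (1 + lam * s ^ r) ^ (-(eps + 2)) := by positivity
  have hY0 : 0 ≤ lam * (1 + lam * s ^ r) ^ (-(eps + 1)) := by positivity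
  have hbracket : |(eps + 1) * r * (lam ^ 2 * s ^ r * (1 + lam * s ^ r) ^ (-(eps + 2)))
      - (r - 2) * (lam * (1 + lam * s ^ r) ^ (-(eps + 1)))| ≤ (eps + 2) * r := by
    have h1 := mul_le_mul_of_nonneg_left hX (by positivity : 0 ≤ (eps + 1) * r)
    have h2 := mul_le_mul_of_nonneg_left hY (by linarith : 0 ≤ r - 2)
    have h3 := mul_nonneg (by positivity : 0 ≤ (eps + 1) * r) hX0
    have h4 := mul_nonneg (by linarith : 0 ≤ r - 2) hY0
    rw [abs_le]; constructor <;> linarith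
  rw [tamingGradCoeffDeriv, abs_mul, abs_of_nonneg (by positivity : 0 ≤ eps * r * s ^ (r - 3))]
  calc _ ≤ eps * r * s ^ (r - 3) * ((eps + 2) * r) := by gcongr
    _ = _ := by ring

lemma abs_tamingGradCoeff_sub_le (hlam0 : 0 ≤ lam) (hlam1 : lam ≤ 1) (heps : 0 ≤ eps)
    (hr : 3 ≤ r) {R t : ℝ} (hs : s ∈ Set.Icc 0 R) (ht : t ∈ Set.Icc 0 R) :
    |tamingGradCoeff lam r eps s - tamingGradCoeff lam r eps t|
      ≤ eps * (eps + 2) * r ^ 2 * R ^ (r - 3) * |s - t| :=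
  (convex_Icc 0 R).norm_image_sub_le_of_norm_hasDerivWithin_le
    (fun x hx => (hasDerivAt_tamingGradCoeff hlam0 hr hx.1).hasDerivWithinAt)
    (fun x hx => (abs_tamingGradCoeffDeriv_le hlam0 hlam1 hx.1 heps hr).trans
      (by gcongr; exacts [hx.1, hx.2])) ht hs

end Scalar

lemma norm_smul_sub_smul_le {𝕜 V : Type*} [NormedField 𝕜] [SeminormedAddCommGroup V]
    [NormedSpace 𝕜 V] (c c' : 𝕜) (v v' : V) :
    ‖c • v - c' • v'‖ ≤ ‖c - c'‖ * ‖v‖ + ‖c'‖ * ‖v - v'‖ := by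
  rw [show c • v - c' • v' = (c - c') • v + c' • (v - v') by rw [sub_smul, smul_sub]; abel,
    ← norm_smul, ← norm_smul]
  exact norm_add_le _ _

lemma ContinuousLinearMap.norm_smulRight_sub_smulRight_le {𝕜 E F : Type*}
    [NontriviallyNormedField 𝕜] [SeminormedAddCommGroup E] [NormedSpace 𝕜 E]
    [SeminormedAddCommGroup F] [NormedSpace 𝕜 F] (f f' : StrongDual 𝕜 E) (v v' : F) :
    ‖f.smulRight v - f'.smulRight v'‖ ≤ ‖f - f'‖ * ‖v‖ + ‖f'‖ * ‖v - v'‖ := by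
  have hsplit :
      f.smulRight v - f'.smulRight v' = (f - f').smulRight v + f'.smulRight (v - v') := by
    ext x; simp only [sub_apply, add_apply, smulRight_apply, sub_smul, smul_sub]; abel
  rw [hsplit, ← norm_smulRight_apply, ← norm_smulRight_apply]
  exact norm_add_le _ _

lemma mul_one_add_pow_le {K x P : ℝ} {n : ℕ} (hK : 0 ≤ K) (hx : 0 ≤ x) (hn : n ≠ 0)
    (hxP : 1 + x ≤ P) : K * (1 + x ^ n) ≤ K * P ^ n := by
  gcongr
  calc 1 + x ^ n = 1 ^ n + x ^ n := by rw [one_pow]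
    _ ≤ (1 + x) ^ n := pow_add_pow_le zero_le_one hx hn
    _ ≤ P ^ n := by gcongr

section InnerProductSpace

variable {E : Type*} [NormedAddCommGroup E] [InnerProductSpace ℝ E]

noncomputable def tamed (a lam r eps : ℝ) (h : E → E) (x : E) : E :=
  a • x + tamingFactor lam r eps ‖x‖ • (h x - a • x)

variable {lam r eps : ℝ}

lemma hasFDerivAt_tamingFactor_norm (hlam : 0 ≤ lam) (hr : 2 ≤ r) (x : E) :
    HasFDerivAt (fun y : E => tamingFactor lam r eps ‖y‖)
      (innerSL ℝ (tamingGradCoeff lam r eps ‖x‖ • x)) x := by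
  have hW := one_le_one_add_mul_rpow (r := r) hlam (norm_nonneg x)
  have hinner := ((hasFDerivAt_norm_rpow x (by linarith : 1 < r)).const_mul lam).const_add 1
  refine ((hasDerivAt_rpow_const (p := -eps) (Or.inl (by linarith))).comp_hasFDerivAt x
    hinner).congr_fderiv ?_
  rw [map_smul, smul_smul, smul_smul, show -eps - 1 = -(eps + 1) by ring]
  unfold tamingGradCoeff
  ring_nf

lemma norm_tamingGradCoeff_smul_le (hlam0 : 0 ≤ lam) (hlam1 : lam ≤ 1) (heps : 0 ≤ eps)
    (hr : 2 ≤ r) (x : E) : ‖tamingGradCoeff lam r eps ‖x‖ • x‖ ≤ eps * r := by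
  rw [norm_smul, Real.norm_eq_abs]
  exact abs_tamingGradCoeff_mul_le hlam0 hlam1 (norm_nonneg x) heps hr

lemma abs_tamingFactor_norm_sub_le (hlam0 : 0 ≤ lam) (hlam1 : lam ≤ 1) (heps : 0 ≤ eps)
    (hr : 2 ≤ r) (x y : E) :
    |tamingFactor lam r eps ‖x‖ - tamingFactor lam r eps ‖y‖| ≤ eps * r * ‖x - y‖ :=
  convex_univ.norm_image_sub_le_of_norm_hasFDerivWithin_le
    (fun z _ => (hasFDerivAt_tamingFactor_norm hlam0 hr z).hasFDerivWithinAt)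
    (fun z _ => (innerSL_apply_norm ℝ _).trans_le
      (norm_tamingGradCoeff_smul_le hlam0 hlam1 heps hr z))
    (Set.mem_univ y) (Set.mem_univ x)

lemma norm_tamingGradCoeff_smul_sub_le (hlam0 : 0 ≤ lam) (hlam1 : lam ≤ 1) (heps : 0 ≤ eps)
    (hr : 3 ≤ r) {R : ℝ} {x y : E} (hx : ‖x‖ ≤ R) (hy : ‖y‖ ≤ R) :
    ‖tamingGradCoeff lam r eps ‖x‖ • x - tamingGradCoeff lam r eps ‖y‖ • y‖
      ≤ (eps * r + eps * (eps + 2) * r ^ 2 * R ^ (r - 2)) * ‖x - y‖ := by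
  have hR : 0 ≤ R := (norm_nonneg x).trans hx
  have hcoeff := abs_tamingGradCoeff_sub_le hlam0 hlam1 heps hr
    ⟨norm_nonneg x, hx⟩ ⟨norm_nonneg y, hy⟩
  have hRpow : R ^ (r - 3) * R = R ^ (r - 2) := by
    rw [← rpow_add_one' hR (by linarith)]; ring_nf
  refine (norm_smul_sub_smul_le _ _ x y).trans ?_
  rw [Real.norm_eq_abs, Real.norm_eq_abs]
  calc |tamingGradCoeff lam r eps ‖x‖ - tamingGradCoeff lam r eps ‖y‖| * ‖x‖
        + |tamingGradCoeff lam r eps ‖y‖| * ‖x - y‖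
      ≤ eps * (eps + 2) * r ^ 2 * R ^ (r - 3) * ‖x - y‖ * R + eps * r * ‖x - y‖ := by
        gcongr
        · exact hcoeff.trans (by gcongr; exact abs_norm_sub_norm_le x y)
        · exact abs_tamingGradCoeff_le hlam0 hlam1 (norm_nonneg y) heps (by linarith)
    _ = (eps * r + eps * (eps + 2) * r ^ 2 * R ^ (r - 2)) * ‖x - y‖ := by
        rw [← hRpow]; ring

variable {a L K_H K_h P : ℝ} {l : ℕ} {h : E → E} {H : E → E →L[ℝ] E}

lemma hasFDerivAt_tamed {H' : E →L[ℝ] E} {x : E} (hh : HasFDerivAt h H' x) (hlam : 0 ≤ lam)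
    (hr : 2 ≤ r) :
    HasFDerivAt (tamed a lam r eps h)
      (a • ContinuousLinearMap.id ℝ E
        + (tamingFactor lam r eps ‖x‖ • (H' - a • ContinuousLinearMap.id ℝ E)
          + (innerSL ℝ (tamingGradCoeff lam r eps ‖x‖ • x)).smulRight (h x - a • x))) x :=
  ((hasFDerivAt_id x).const_smul a).add
    ((hasFDerivAt_tamingFactor_norm hlam hr x).smul (hh.sub ((hasFDerivAt_id x).const_smul a)))

lemma norm_sub_smul_id_le {H' : E →L[ℝ] E} {x : E} (hH_bd : ‖H'‖ ≤ K_H * (1 + ‖x‖ ^ l))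
    (hK_H : 0 ≤ K_H) (ha : 0 ≤ a) (hl : l ≠ 0) (hxP : 1 + ‖x‖ ≤ P) :
    ‖H' - a • ContinuousLinearMap.id ℝ E‖ ≤ (K_H + a) * P ^ l := by
  have hP : 1 ≤ P ^ l := one_le_pow₀ (by linarith [norm_nonneg x])
  have hid : ‖a • ContinuousLinearMap.id ℝ E‖ ≤ a := by
    rw [norm_smul, Real.norm_eq_abs, abs_of_nonneg ha]
    exact mul_le_of_le_one_right ha (ContinuousLinearMap.norm_id_le)
  calc ‖H' - a • ContinuousLinearMap.id ℝ E‖ ≤ K_H * P ^ l + a * P ^ l := by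
        refine (norm_sub_le _ _).trans (add_le_add ?_ (hid.trans (le_mul_of_one_le_right ha hP)))
        exact hH_bd.trans (mul_one_add_pow_le hK_H (norm_nonneg x) hl hxP)
    _ = (K_H + a) * P ^ l := by ring

lemma norm_sub_smul_le {x : E} (hh_bd : ‖h x‖ ≤ K_h * (1 + ‖x‖ ^ (l + 1))) (hK_h : 0 ≤ K_h)
    (ha : 0 ≤ a) (hxP : 1 + ‖x‖ ≤ P) : ‖h x - a • x‖ ≤ (K_h + a) * P ^ (l + 1) := by
  have hxP' : ‖x‖ ≤ P ^ (l + 1) :=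
    (by linarith : ‖x‖ ≤ P).trans (le_self_pow₀ (by linarith [norm_nonneg x]) (by omega))
  calc ‖h x - a • x‖ ≤ ‖h x‖ + a * ‖x‖ := by
        simpa only [norm_smul, Real.norm_of_nonneg ha] using norm_sub_le (h x) (a • x)
    _ ≤ K_h * P ^ (l + 1) + a * P ^ (l + 1) := by
        gcongr
        exact hh_bd.trans (mul_one_add_pow_le hK_h (norm_nonneg x) (by omega) hxP)
    _ = (K_h + a) * P ^ (l + 1) := by ring

lemma norm_sub_smul_sub_sub_smul_le (hH : ∀ x, HasFDerivAt h (H x) x)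
    (hH_bd : ∀ x, ‖H x‖ ≤ K_H * (1 + ‖x‖ ^ l)) (hK_H : 0 ≤ K_H) (ha : 0 ≤ a) (hl : l ≠ 0)
    (x y : E) :
    ‖(h x - a • x) - (h y - a • y)‖ ≤ (K_H + a) * (1 + ‖x‖ + ‖y‖) ^ l * ‖x - y‖ := by
  have hball : ∀ z ∈ Metric.closedBall (0 : E) (‖x‖ + ‖y‖), 1 + ‖z‖ ≤ 1 + ‖x‖ + ‖y‖ := by
    intro z hz; rw [mem_closedBall_zero_iff] at hz; linarith
  exact (convex_closedBall _ _).norm_image_sub_le_of_norm_hasFDerivWithin_le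
    (fun z _ => ((hH z).sub ((hasFDerivAt_id z).const_smul a)).hasFDerivWithinAt)
    (fun z hz => norm_sub_smul_id_le (hH_bd z) hK_H ha hl (hball z hz))
    (mem_closedBall_zero_iff.2 (le_add_of_nonneg_left (norm_nonneg x)))
    (mem_closedBall_zero_iff.2 (le_add_of_nonneg_right (norm_nonneg y)))

lemma norm_tamingFactor_smul_sub_le
    (hH_lip : ∀ x y, ‖H x - H y‖ ≤ L * (1 + ‖x‖ + ‖y‖) ^ (l - 1) * ‖x - y‖)
    (hH_bd : ∀ x, ‖H x‖ ≤ K_H * (1 + ‖x‖ ^ l)) (hK_H : 0 ≤ K_H) (ha : 0 ≤ a) (hl : l ≠ 0)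
    (hlam0 : 0 ≤ lam) (hlam1 : lam ≤ 1) (heps : 0 ≤ eps) (hr : 2 ≤ r) (x y : E) :
    ‖tamingFactor lam r eps ‖x‖ • (H x - a • ContinuousLinearMap.id ℝ E)
        - tamingFactor lam r eps ‖y‖ • (H y - a • ContinuousLinearMap.id ℝ E)‖
      ≤ (eps * r * (K_H + a) * (1 + ‖x‖ + ‖y‖) ^ l + L * (1 + ‖x‖ + ‖y‖) ^ (l - 1))
        * ‖x - y‖ := by
  have hg := abs_tamingFactor_norm_sub_le hlam0 hlam1 heps hr x y
  have hA := norm_sub_smul_id_le (hH_bd x) hK_H ha hl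
    (by linarith [norm_nonneg y] : 1 + ‖x‖ ≤ 1 + ‖x‖ + ‖y‖)
  refine (norm_smul_sub_smul_le _ _ _ _).trans ?_
  rw [Real.norm_eq_abs, Real.norm_eq_abs, sub_sub_sub_cancel_right]
  calc _ ≤ eps * r * ‖x - y‖ * ((K_H + a) * (1 + ‖x‖ + ‖y‖) ^ l)
        + 1 * (L * (1 + ‖x‖ + ‖y‖) ^ (l - 1) * ‖x - y‖) :=
        add_le_add (mul_le_mul hg hA (norm_nonneg _) ((abs_nonneg _).trans hg))
          (mul_le_mul (abs_tamingFactor_le_one hlam0 (norm_nonneg y) heps) (hH_lip x y)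
            (norm_nonneg _) zero_le_one)
    _ = _ := by ring

lemma norm_smulRight_tamingGradCoeff_sub_le (hH : ∀ x, HasFDerivAt h (H x) x)
    (hH_bd : ∀ x, ‖H x‖ ≤ K_H * (1 + ‖x‖ ^ l)) (hh_bd : ∀ x, ‖h x‖ ≤ K_h * (1 + ‖x‖ ^ (l + 1)))
    (hK_H : 0 ≤ K_H) (hK_h : 0 ≤ K_h) (ha : 0 ≤ a) (hl : l ≠ 0)
    (hlam0 : 0 ≤ lam) (hlam1 : lam ≤ 1) (heps : 0 ≤ eps) (hr : 3 ≤ r) (x y : E) :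
    ‖(innerSL ℝ (tamingGradCoeff lam r eps ‖x‖ • x)).smulRight (h x - a • x)
        - (innerSL ℝ (tamingGradCoeff lam r eps ‖y‖ • y)).smulRight (h y - a • y)‖
      ≤ ((eps * r + eps * (eps + 2) * r ^ 2 * (‖x‖ + ‖y‖) ^ (r - 2)) * (K_h + a)
          * (1 + ‖x‖ + ‖y‖) ^ (l + 1) + eps * r * (K_H + a) * (1 + ‖x‖ + ‖y‖) ^ l) * ‖x - y‖ := by
  have hψ := norm_tamingGradCoeff_smul_sub_le hlam0 hlam1 heps hr
    (le_add_of_nonneg_right (norm_nonneg y)) (le_add_of_nonneg_left (norm_nonneg x))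
  have hF := norm_sub_smul_le (hh_bd x) hK_h ha
    (by linarith [norm_nonneg y] : 1 + ‖x‖ ≤ 1 + ‖x‖ + ‖y‖)
  have hψ' := norm_tamingGradCoeff_smul_le hlam0 hlam1 heps (by linarith : (2:ℝ) ≤ r) y
  refine (ContinuousLinearMap.norm_smulRight_sub_smulRight_le _ _ _ _).trans ?_
  rw [← map_sub, innerSL_apply_norm, innerSL_apply_norm]
  calc _ ≤ (eps * r + eps * (eps + 2) * r ^ 2 * (‖x‖ + ‖y‖) ^ (r - 2)) * ‖x - y‖
          * ((K_h + a) * (1 + ‖x‖ + ‖y‖) ^ (l + 1))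
        + eps * r * ((K_H + a) * (1 + ‖x‖ + ‖y‖) ^ l * ‖x - y‖) :=
        add_le_add (mul_le_mul hψ hF (norm_nonneg _) ((norm_nonneg _).trans hψ))
          (mul_le_mul hψ' (norm_sub_smul_sub_sub_smul_le hH hH_bd hK_H ha hl x y)
            (norm_nonneg _) ((norm_nonneg _).trans hψ'))
    _ = _ := by ring

theorem norm_fderiv_tamed_sub_le (hH : ∀ x, HasFDerivAt h (H x) x)
    (hH_lip : ∀ x y, ‖H x - H y‖ ≤ L * (1 + ‖x‖ + ‖y‖) ^ (l - 1) * ‖x - y‖)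
    (hH_bd : ∀ x, ‖H x‖ ≤ K_H * (1 + ‖x‖ ^ l)) (hh_bd : ∀ x, ‖h x‖ ≤ K_h * (1 + ‖x‖ ^ (l + 1)))
    (hL : 0 ≤ L) (hK_H : 0 ≤ K_H) (hK_h : 0 ≤ K_h) (ha : 0 ≤ a) (hl : l ≠ 0)
    (hlam0 : 0 ≤ lam) (hlam1 : lam ≤ 1) (heps : 0 ≤ eps) (hr : 3 ≤ r) (x y : E) :
    ‖fderiv ℝ (tamed a lam r eps h) x - fderiv ℝ (tamed a lam r eps h) y‖
      ≤ (2 * (eps * r) * (K_H + a) + L + (eps * r + eps * (eps + 2) * r ^ 2) * (K_h + a))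
        * (1 + ‖x‖ + ‖y‖) ^ (r + l - 1) * ‖x - y‖ := by
  set P := 1 + ‖x‖ + ‖y‖ with hPdef
  have hP : 1 ≤ P := by linarith [norm_nonneg x, norm_nonneg y]
  have hpow : ∀ k : ℕ, k ≤ l + 1 → P ^ k ≤ P ^ (r + l - 1) := fun k hk => by
    rw [← rpow_natCast]
    have hk' : (k : ℝ) ≤ l + 1 := by exact_mod_cast hk
    exact rpow_le_rpow_of_exponent_le hP (by linarith)
  have hpow' : (‖x‖ + ‖y‖) ^ (r - 2) * P ^ (l + 1) ≤ P ^ (r + l - 1) := by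
    rw [show r + l - 1 = (r - 2) + (l + 1 : ℕ) by push_cast; ring, rpow_add (by linarith),
      rpow_natCast]
    gcongr
    · linarith
    · linarith [hPdef]
  rw [(hasFDerivAt_tamed (hH x) hlam0 (by linarith)).fderiv,
    (hasFDerivAt_tamed (hH y) hlam0 (by linarith)).fderiv, add_sub_add_left_eq_sub,
    add_sub_add_comm]
  refine ((norm_add_le _ _).trans (add_le_add
    (norm_tamingFactor_smul_sub_le hH_lip hH_bd hK_H ha hl hlam0 hlam1 heps (by linarith) x y)
    (norm_smulRight_tamingGradCoeff_sub_le hH hH_bd hh_bd hK_H hK_h ha hl hlam0 hlam1 heps hr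
      x y))).trans ?_
  rw [← add_mul]
  gcongr ?_ * _
  have hr0 : 0 ≤ r := by linarith
  have h1 := mul_le_mul_of_nonneg_left (hpow l (by omega))
    (by positivity : 0 ≤ eps * r * (K_H + a))
  have h2 := mul_le_mul_of_nonneg_left (hpow (l - 1) (by omega)) hL
  have h3 := mul_le_mul_of_nonneg_left (hpow (l + 1) le_rfl)
    (by positivity : 0 ≤ eps * r * (K_h + a))
  have h4 := mul_le_mul_of_nonneg_left hpow'
    (by positivity : 0 ≤ eps * (eps + 2) * r ^ 2 * (K_h + a))
  linarith

end InnerProductSpace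

lemma ContDiff.differentiable_gradient {F : Type*} [NormedAddCommGroup F] [InnerProductSpace ℝ F]
    [CompleteSpace F] {u : F → ℝ} {n : WithTop ℕ∞} (hu : ContDiff ℝ n u) (hn : 2 ≤ n) :
    Differentiable ℝ (gradient u) :=
  (InnerProductSpace.toDual ℝ F).symm.toContinuousLinearEquiv.differentiable.comp
    ((hu.fderiv_right (m := 1) hn).differentiable one_ne_zero)

lemma tamed_lipschitz_const_le {eps r K_H L K_h a M : ℝ} (heps : 0 < eps) (hm : 2 ≤ eps * r)
    (hK_H : K_H ≤ M) (hL : L ≤ M) (hK_h : K_h ≤ M) (haM : a ≤ M) (ha : 0 ≤ a) :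
    2 * (eps * r) * (K_H + a) + L + (eps * r + eps * (eps + 2) * r ^ 2) * (K_h + a)
      ≤ (10 * √2 + 4 / eps) * (eps * r) ^ 2 * M := by
  set m := eps * r
  have hm0 : 0 ≤ m := by linarith
  have hM : 0 ≤ M := ha.trans haM
  have hsq : eps * (eps + 2) * r ^ 2 = m ^ 2 + 2 * m ^ 2 / eps := by simp only [m]; field_simp
  have hsqrt : (1 : ℝ) ≤ √2 := Real.one_le_sqrt.2 (by norm_num)
  rw [hsq]
  calc _ ≤ 2 * m * (2 * M) + M + (m + (m ^ 2 + 2 * m ^ 2 / eps)) * (2 * M) := by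
        gcongr <;> linarith
    _ = (1 + 6 * m + 2 * m ^ 2) * M + 4 / eps * m ^ 2 * M := by ring
    _ ≤ 10 * √2 * m ^ 2 * M + 4 / eps * m ^ 2 * M := by gcongr; nlinarith
    _ = _ := by ring

theorem kTULA_tamed_deriv_lipschitz_general
    {d : ℕ}
    (u : EuclideanSpace ℝ (Fin d) → ℝ) (hu : ContDiff ℝ 3 u)
    (h : EuclideanSpace ℝ (Fin d) → EuclideanSpace ℝ (Fin d))
    (H : EuclideanSpace ℝ (Fin d) →
      EuclideanSpace ℝ (Fin d) →L[ℝ] EuclideanSpace ℝ (Fin d))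
    (hgrad : ∀ θ, h θ = gradient u θ)
    (hHess : ∀ θ, H θ = fderiv ℝ (gradient u) θ)
    (L K_H K_h a : ℝ)
    (hL : 0 < L) (hK_H : 0 < K_H) (hK_h : 0 < K_h) (ha : 0 < a)
    (l : ℕ) (hl : 1 ≤ l)
    (hH_lip : ∀ θ θ' : EuclideanSpace ℝ (Fin d),
      ‖H θ - H θ'‖ ≤ L * (1 + ‖θ‖ + ‖θ'‖) ^ (l - 1) * ‖θ - θ'‖)
    (hH_bd : ∀ θ : EuclideanSpace ℝ (Fin d), ‖H θ‖ ≤ K_H * (1 + ‖θ‖ ^ l))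
    (hh_bd : ∀ θ : EuclideanSpace ℝ (Fin d), ‖h θ‖ ≤ K_h * (1 + ‖θ‖ ^ (l + 1)))
    (hlam : ℝ → ℝ → EuclideanSpace ℝ (Fin d) → EuclideanSpace ℝ (Fin d))
    (hlam_def : ∀ (lam eps : ℝ) (θ : EuclideanSpace ℝ (Fin d)),
      hlam lam eps θ =
        a • θ + ((1 + lam * ‖θ‖ ^ (((l : ℝ) + 1) / eps)) ^ eps)⁻¹ • (h θ - a • θ)) :
    ∀ (θ θ' : EuclideanSpace ℝ (Fin d)) (lam eps : ℝ),
      0 < lam → lam < 1 → 0 < eps → eps ≤ 1 / 2 →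
      ‖fderiv ℝ (hlam lam eps) θ - fderiv ℝ (hlam lam eps) θ'‖ ≤
        (10 * Real.sqrt 2 + 4 / eps) * ((l : ℝ) + 1) ^ 2 *
          max (max (max K_H L) K_h) a *
          (1 + ‖θ‖ + ‖θ'‖) ^ (((l : ℝ) + 1) * (1 / eps + 1) - 2) * ‖θ - θ'‖ := by
  intro θ θ' lam eps hlam0 hlam1 heps0 heps1
  set r := ((l : ℝ) + 1) / eps
  have hm : eps * r = l + 1 := by simp only [r]; field_simp
  have hr : 3 ≤ r := by
    rw [le_div_iff₀ heps0]
    linarith [(Nat.one_le_cast (α := ℝ)).2 hl]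
  have hH : ∀ x, HasFDerivAt h (H x) x := fun x => by
    rw [funext hgrad, hHess]
    exact (hu.differentiable_gradient (by norm_num) x).hasFDerivAt
  have htamed : hlam lam eps = tamed a lam r eps h := funext fun x => by
    rw [hlam_def, tamed, tamingFactor, rpow_neg (by positivity)]
  have hexp : ((l : ℝ) + 1) * (1 / eps + 1) - 2 = r + l - 1 := by simp only [r]; field_simp; ring
  rw [htamed, hexp, ← hm]
  refine (norm_fderiv_tamed_sub_le hH hH_lip hH_bd hh_bd hL.le hK_H.le hK_h.le ha.le (by omega)
    hlam0.le hlam1.le heps0.le hr θ θ').trans ?_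
  gcongr
  exact tamed_lipschitz_const_le heps0 (by rw [hm]; linarith [(Nat.one_le_cast (α := ℝ)).2 hl])
    (by simp) (by simp) (by simp) (by simp) ha.le

theorem kTULA_tamed_deriv_lipschitz
    {d : ℕ} (hd : 0 < d)
    (u : EuclideanSpace ℝ (Fin d) → ℝ) (hu : ContDiff ℝ 3 u)
    (h : EuclideanSpace ℝ (Fin d) → EuclideanSpace ℝ (Fin d))
    (H : EuclideanSpace ℝ (Fin d) →
      EuclideanSpace ℝ (Fin d) →L[ℝ] EuclideanSpace ℝ (Fin d))
    (hgrad : ∀ θ, h θ = gradient u θ)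
    (hHess : ∀ θ, H θ = fderiv ℝ (gradient u) θ)
    (L K_H K_h a b : ℝ)
    (hL : 0 < L) (hK_H : 0 < K_H) (hK_h : 0 < K_h) (ha : 0 < a) (hb : 0 < b)
    (l : ℕ) (hl : 1 ≤ l)
    (hH_lip : ∀ θ θ' : EuclideanSpace ℝ (Fin d),
      ‖H θ - H θ'‖ ≤ L * (1 + ‖θ‖ + ‖θ'‖) ^ (l - 1) * ‖θ - θ'‖)
    (hH_bd : ∀ θ : EuclideanSpace ℝ (Fin d), ‖H θ‖ ≤ K_H * (1 + ‖θ‖ ^ l))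
    (hh_bd : ∀ θ : EuclideanSpace ℝ (Fin d), ‖h θ‖ ≤ K_h * (1 + ‖θ‖ ^ (l + 1)))
    (hdiss : ∀ θ : EuclideanSpace ℝ (Fin d), a * ‖θ‖ ^ 2 - b ≤ (inner ℝ (h θ) θ : ℝ))
    (hlam : ℝ → ℝ → EuclideanSpace ℝ (Fin d) → EuclideanSpace ℝ (Fin d))
    (hlam_def : ∀ (lam eps : ℝ) (θ : EuclideanSpace ℝ (Fin d)),
      hlam lam eps θ =
        a • θ + ((1 + lam * ‖θ‖ ^ (((l : ℝ) + 1) / eps)) ^ eps)⁻¹ • (h θ - a • θ)) :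
    ∀ (θ θ' : EuclideanSpace ℝ (Fin d)) (lam eps : ℝ),
      0 < lam → lam < 1 → 0 < eps → eps ≤ 1 / 2 →
      ‖fderiv ℝ (hlam lam eps) θ - fderiv ℝ (hlam lam eps) θ'‖ ≤
        (10 * Real.sqrt 2 + 4 / eps) * ((l : ℝ) + 1) ^ 2 *
          max (max (max K_H L) K_h) a *
          (1 + ‖θ‖ + ‖θ'‖) ^ (((l : ℝ) + 1) * (1 / eps + 1) - 2) * ‖θ - θ'‖ :=
  kTULA_tamed_deriv_lipschitz_general u hu h H hgrad hHess L K_H K_h a hL hK_H hK_h ha l hl hH_lip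
    hH_bd hh_bd hlam hlam_def
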